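/- arXiv:1504.07545 — 2 statements merged into one kernel-verified Lean document; each statement's English description precedes it below -/
import Mathlib

section
/- Let $P = \sum_{i \in N} P_i$ be a Minkowski sum of polymatroid base polytopes $P_i$ over a common finite ground set $E$, fix $j \in N$ and $0 \leq \bar{d}_j < d_j$ with $P_j$ scaled accordingly, and let $\bar{P} = (\bar{d}_j/d_j) P_j + \sum_{i \neq j} P_i$. Suppose $c_e : \mathbb{R}_{\geq 0} \to \mathbb{R}_{\geq 0}$ are continuous nondecreasing cost functions and $x$, $\bar{x}$ minimize the Beckmann potential $\Phi(x) = \sum_e \int_0^{x_e} c_e(t)\,dt$ over $P$ and over $\bar{P}$, respectively. Then $c_e(\bar{x}_e) \leq c_e(x_e)$ for every $e \in E$. -/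
/-!
By the Minkowski sum theorem for base polytopes, `P = B(σ + τ)` and `P̄ = B(σ)` with
`σ = (d̄ⱼ/dⱼ) ρⱼ + ∑_{i ≠ j} ρᵢ` and `τ = (1 - d̄ⱼ/dⱼ) ρⱼ` polymatroid ranks. A minimizer of the
Beckmann potential admits no profitable exchange of load between two elements unless a tight set
separates them. If `c e (x e) < c e (x̄ e)` for some `e`, let `U` be the smallest `x`-tight set
containing `e` and `W` the largest `x̄`-tight set avoiding `e`; these exchange conditions force
`x ≤ x̄` on `U \ W`, strictly at `e`, while submodularity of `σ + τ` and monotonicity of `τ` give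
`x̄(U \ W) ≤ x(U \ W)`.
-/

open Finset MeasureTheory Pointwise

/-- The polymatroid base polytope of `ρ`. -/
def basePolytope {E : Type*} [Fintype E] (ρ : Finset E → ℝ) : Set (E → ℝ) :=
  {x | (∀ e, 0 ≤ x e) ∧ (∀ U : Finset E, ∑ e ∈ U, x e ≤ ρ U) ∧ ∑ e, x e = ρ Finset.univ}

/-- The Beckmann potential. -/
noncomputable def beckmann {E : Type*} [Fintype E] (c : E → ℝ → ℝ) (x : E → ℝ) : ℝ :=
  ∑ e, ∫ t in (0:ℝ)..(x e), c e t

structure IsPolymatroidRank {E : Type*} [DecidableEq E] (ρ : Finset E → ℝ) : Prop where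
  submodular : ∀ U V : Finset E, ρ (U ∪ V) + ρ (U ∩ V) ≤ ρ U + ρ V
  monotone : Monotone ρ
  map_empty : ρ ∅ = 0

namespace IsPolymatroidRank

variable {E : Type*} [DecidableEq E] {σ τ : Finset E → ℝ}

lemma zero : IsPolymatroidRank (0 : Finset E → ℝ) :=
  ⟨fun _ _ => by simp, monotone_const, rfl⟩

lemma add (hσ : IsPolymatroidRank σ) (hτ : IsPolymatroidRank τ) : IsPolymatroidRank (σ + τ) where
  submodular U V := by
    simp only [Pi.add_apply]
    linarith [hσ.submodular U V, hτ.submodular U V]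
  monotone := hσ.monotone.add hτ.monotone
  map_empty := by simp [hσ.map_empty, hτ.map_empty]

lemma smul (hσ : IsPolymatroidRank σ) {a : ℝ} (ha : 0 ≤ a) : IsPolymatroidRank (a • σ) where
  submodular U V := by
    simp only [Pi.smul_apply, smul_eq_mul]
    linarith [mul_le_mul_of_nonneg_left (hσ.submodular U V) ha]
  monotone := hσ.monotone.const_smul ha
  map_empty := by simp [hσ.map_empty]

lemma sum {N : Type*} {s : Finset N} {ρ : N → Finset E → ℝ}
    (hρ : ∀ i ∈ s, IsPolymatroidRank (ρ i)) : IsPolymatroidRank (∑ i ∈ s, ρ i) :=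
  Finset.sum_induction _ _ (fun _ _ => add) zero hρ

end IsPolymatroidRank

section Geometry

variable {E : Type*} [Fintype E]

lemma convex_basePolytope (ρ : Finset E → ℝ) : Convex ℝ (basePolytope ρ) := by
  rintro u ⟨hu0, huU, huT⟩ v ⟨hv0, hvU, hvT⟩ a b ha hb hab
  have hsum : ∀ U : Finset E, ∑ e ∈ U, (a • u + b • v) e = a * ∑ e ∈ U, u e + b * ∑ e ∈ U, v e :=
    fun U => by simp [sum_add_distrib, mul_sum]
  refine ⟨fun e => ?_, fun U => ?_, ?_⟩
  · have := hu0 e; have := hv0 e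
    simp only [Pi.add_apply, Pi.smul_apply, smul_eq_mul]
    positivity
  · rw [hsum]
    calc _ ≤ a * ρ U + b * ρ U :=
          add_le_add (mul_le_mul_of_nonneg_left (huU U) ha) (mul_le_mul_of_nonneg_left (hvU U) hb)
      _ = ρ U := by rw [← add_mul, hab, one_mul]
  · rw [hsum, huT, hvT, ← add_mul, hab, one_mul]

lemma isClosed_basePolytope (ρ : Finset E → ℝ) : IsClosed (basePolytope ρ) := by
  have hcont : ∀ U : Finset E, Continuous fun x : E → ℝ => ∑ e ∈ U, x e :=
    fun U => continuous_finsetSum U fun e _ => continuous_apply e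
  have : basePolytope ρ = (⋂ e, {x : E → ℝ | 0 ≤ x e}) ∩
      ((⋂ U : Finset E, {x | ∑ e ∈ U, x e ≤ ρ U}) ∩ {x | ∑ e, x e = ρ univ}) := by
    ext x; simp [basePolytope]
  rw [this]
  exact (isClosed_iInter fun e => isClosed_le continuous_const (continuous_apply e)).inter
    ((isClosed_iInter fun U => isClosed_le (hcont U) continuous_const).inter
      (isClosed_eq (hcont univ) continuous_const))

lemma isCompact_basePolytope (ρ : Finset E → ℝ) : IsCompact (basePolytope ρ) := by
  refine (isCompact_univ_pi fun e => isCompact_Icc (a := 0) (b := ρ {e})).of_isClosed_subset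
    (isClosed_basePolytope ρ) ?_
  rintro x ⟨hx0, hxU, -⟩ e -
  exact ⟨hx0 e, by simpa using hxU {e}⟩

lemma basePolytope_zero : basePolytope (0 : Finset E → ℝ) = 0 := by
  ext x
  refine ⟨fun ⟨hx0, hxU, _⟩ => funext fun e => le_antisymm (by simpa using hxU {e}) (hx0 e), ?_⟩
  rintro rfl
  exact ⟨fun _ => le_rfl, fun _ => by simp, by simp⟩

lemma add_subset_basePolytope_add (σ τ : Finset E → ℝ) :
    basePolytope σ + basePolytope τ ⊆ basePolytope (σ + τ) := by
  rintro _ ⟨u, ⟨hu0, huU, huT⟩, v, ⟨hv0, hvU, hvT⟩, rfl⟩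
  refine ⟨fun e => add_nonneg (hu0 e) (hv0 e), fun U => ?_, ?_⟩
  · simpa [sum_add_distrib] using add_le_add (huU U) (hvU U)
  · simp [sum_add_distrib, huT, hvT]

lemma smul_subset_basePolytope_smul {a : ℝ} (ha : 0 ≤ a) (ρ : Finset E → ℝ) :
    a • basePolytope ρ ⊆ basePolytope (a • ρ) := by
  rintro _ ⟨y, ⟨hy0, hyU, hyT⟩, rfl⟩
  refine ⟨fun e => mul_nonneg ha (hy0 e), fun U => ?_, ?_⟩
  · simpa [← mul_sum] using mul_le_mul_of_nonneg_left (hyU U) ha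
  · simp [← mul_sum, hyT]

end Geometry

section Greedy

variable {E : Type*} [Fintype E] {n : ℕ} (f : Fin n ≃ E)

def initialSegment (k : ℕ) : Finset E := univ.filter fun e => (f.symm e : ℕ) < k

def greedyVector (ρ : Finset E → ℝ) (e : E) : ℝ :=
  ρ (initialSegment f ((f.symm e : ℕ) + 1)) - ρ (initialSegment f (f.symm e))

@[simp] lemma initialSegment_zero : initialSegment f 0 = ∅ := by simp [initialSegment]

lemma initialSegment_eq_univ : initialSegment f n = univ := by
  ext e; simp [initialSegment]

lemma initialSegment_mono : Monotone (initialSegment f) := by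
  intro k l hkl e
  simp only [initialSegment, mem_filter, mem_univ, true_and]
  omega

lemma apply_notMem_initialSegment {k : ℕ} (hk : k < n) : f ⟨k, hk⟩ ∉ initialSegment f k := by
  simp [initialSegment]

lemma greedyVector_apply (ρ : Finset E → ℝ) {k : ℕ} (hk : k < n) :
    greedyVector f ρ (f ⟨k, hk⟩) = ρ (initialSegment f (k + 1)) - ρ (initialSegment f k) := by
  simp [greedyVector]

lemma greedyVector_add (σ τ : Finset E → ℝ) :
    greedyVector f (σ + τ) = greedyVector f σ + greedyVector f τ := by
  ext e; simp only [greedyVector, Pi.add_apply]; ring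

variable [DecidableEq E]

lemma initialSegment_succ {k : ℕ} (hk : k < n) :
    initialSegment f (k + 1) = insert (f ⟨k, hk⟩) (initialSegment f k) := by
  ext e
  simp only [initialSegment, mem_filter, mem_univ, true_and, mem_insert, ← Equiv.symm_apply_eq,
    Fin.ext_iff]
  omega

lemma sum_greedyVector_initialSegment (ρ : Finset E → ℝ) {k : ℕ} (hk : k ≤ n) :
    ∑ e ∈ initialSegment f k, greedyVector f ρ e = ρ (initialSegment f k) - ρ ∅ := by
  induction k with
  | zero => simp
  | succ k ih =>
    rw [initialSegment_succ f hk, sum_insert (apply_notMem_initialSegment f hk),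
      ih (by omega), greedyVector_apply, initialSegment_succ f hk]
    ring

lemma sum_greedyVector_inter_le {ρ : Finset E → ℝ} (hρ : IsPolymatroidRank ρ) (U : Finset E)
    {k : ℕ} (hk : k ≤ n) :
    ∑ e ∈ U ∩ initialSegment f k, greedyVector f ρ e ≤ ρ (U ∩ initialSegment f k) := by
  induction k with
  | zero => simp [hρ.map_empty]
  | succ k ih =>
    have hk' : k < n := hk
    have ha := apply_notMem_initialSegment f hk'
    have hga := greedyVector_apply f ρ hk'
    rw [initialSegment_succ f hk'] at hga ⊢
    set a := f ⟨k, hk'⟩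
    set S := initialSegment f k
    by_cases haU : a ∈ U
    · have hsub := hρ.submodular (insert a (U ∩ S)) S
      have hunion : insert a (U ∩ S) ∪ S = insert a S := by grind
      have hinter : insert a (U ∩ S) ∩ S = U ∩ S := by grind
      rw [hunion, hinter] at hsub
      rw [inter_insert_of_mem haU, sum_insert fun h => ha (mem_inter.1 h).2, hga]
      linarith [ih (by omega)]
    · rw [inter_insert_of_notMem haU]
      exact ih (by omega)

lemma greedyVector_mem_basePolytope {ρ : Finset E → ℝ} (hρ : IsPolymatroidRank ρ) :
    greedyVector f ρ ∈ basePolytope ρ := by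
  refine ⟨fun e => ?_, fun U => ?_, ?_⟩
  · exact sub_nonneg.2 (hρ.monotone (initialSegment_mono f (Nat.le_succ _)))
  · simpa [initialSegment_eq_univ] using sum_greedyVector_inter_le f hρ U le_rfl
  · simpa [initialSegment_eq_univ, hρ.map_empty] using
      sum_greedyVector_initialSegment f ρ le_rfl

/-- Abel summation along the initial segments: the slacks of `x` on them are nonnegative and
vanish on the last one, while `w ∘ f` decreases. -/
lemma sum_mul_le_sum_mul_greedyVector {ρ : Finset E → ℝ} (hρ : IsPolymatroidRank ρ)
    {w : E → ℝ} (hw : Antitone (w ∘ f)) {x : E → ℝ} (hx : x ∈ basePolytope ρ) :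
    ∑ e, w e * x e ≤ ∑ e, w e * greedyVector f ρ e := by
  obtain ⟨-, hxU, hxT⟩ := hx
  let slack k := ρ (initialSegment f k) - ∑ e ∈ initialSegment f k, x e
  let gain k := ∑ e ∈ initialSegment f k, w e * (greedyVector f ρ e - x e)
  have step : ∀ k (hk : k < n), w (f ⟨k, hk⟩) * slack k ≤ gain k →
      w (f ⟨k, hk⟩) * slack (k + 1) ≤ gain (k + 1) := by
    intro k hk h
    have hg := greedyVector_apply f ρ hk
    simp only [slack, gain] at h ⊢
    rw [initialSegment_succ f hk] at hg ⊢
    have ha := apply_notMem_initialSegment f hk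
    rw [sum_insert ha, sum_insert ha, hg]
    linear_combination h
  have bound : ∀ k (hk : k < n), w (f ⟨k, hk⟩) * slack k ≤ gain k := by
    intro k
    induction k with
    | zero => intro hk; simp [slack, gain, hρ.map_empty]
    | succ k ih =>
      intro hk
      have hw_le : w (f ⟨k + 1, hk⟩) ≤ w (f ⟨k, by omega⟩) := hw (Fin.mk_le_mk.2 k.le_succ)
      have hslack : 0 ≤ slack (k + 1) := sub_nonneg.2 (hxU _)
      nlinarith [step k (by omega) (ih (by omega))]
  cases n with
  | zero =>
    have : (univ : Finset E) = ∅ := by rw [← initialSegment_eq_univ f, initialSegment_zero]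
    simp [this]
  | succ m =>
    have h := step m m.lt_succ_self (bound m _)
    simp only [slack, gain, initialSegment_eq_univ, hxT, sub_self, mul_zero, mul_sub,
      sum_sub_distrib] at h
    linarith

end Greedy

lemma exists_equiv_antitone {E : Type*} [Fintype E] (w : E → ℝ) :
    ∃ f : Fin (Fintype.card E) ≃ E, Antitone (w ∘ f) := by
  let e₀ := (Fintype.equivFin E).symm
  refine ⟨(Tuple.sort (-(w ∘ e₀))).trans e₀, fun i j hij => ?_⟩
  simpa using Tuple.monotone_sort (-(w ∘ e₀)) hij

lemma basePolytope_nonempty {E : Type*} [Fintype E] [DecidableEq E] {ρ : Finset E → ℝ}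
    (hρ : IsPolymatroidRank ρ) : (basePolytope ρ).Nonempty :=
  ⟨_, greedyVector_mem_basePolytope (Fintype.equivFin E).symm hρ⟩

section MinkowskiSum

variable {E : Type*} [Fintype E] [DecidableEq E] {σ τ : Finset E → ℝ}

/-- A point of `B(σ + τ)` outside the compact convex set `B(σ) + B(τ)` would be separated from it
by a linear functional `w`, but the greedy vector of `σ + τ` along an ordering by decreasing `w`
maximizes `w` on `B(σ + τ)` and splits as a greedy vector of `σ` plus one of `τ`. -/
theorem basePolytope_add (hσ : IsPolymatroidRank σ) (hτ : IsPolymatroidRank τ) :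
    basePolytope (σ + τ) = basePolytope σ + basePolytope τ := by
  refine subset_antisymm (fun x hx => ?_) (add_subset_basePolytope_add σ τ)
  by_contra hxn
  obtain ⟨φ, u, hφu, huφ⟩ := geometric_hahn_banach_closed_point
    ((convex_basePolytope σ).add (convex_basePolytope τ))
    ((isCompact_basePolytope σ).add (isCompact_basePolytope τ)).isClosed hxn
  set w : E → ℝ := fun e => φ fun j => if e = j then 1 else 0
  have hφ : ∀ y, φ y = ∑ e, w e * y e := fun y => by
    simpa [mul_comm] using φ.toLinearMap.pi_apply_eq_sum_univ y
  obtain ⟨f, hf⟩ := exists_equiv_antitone w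
  have hsep := hφu _ (Set.add_mem_add (greedyVector_mem_basePolytope f hσ)
    (greedyVector_mem_basePolytope f hτ))
  have hmax := sum_mul_le_sum_mul_greedyVector f (hσ.add hτ) hf hx
  rw [hφ, ← greedyVector_add] at hsep
  linarith [hφ x]

theorem smul_basePolytope {ρ : Finset E → ℝ} (hρ : IsPolymatroidRank ρ) {a : ℝ} (ha : 0 ≤ a) :
    a • basePolytope ρ = basePolytope (a • ρ) := by
  obtain rfl | ha := ha.eq_or_lt
  · rw [Set.zero_smul_set (basePolytope_nonempty hρ), zero_smul, basePolytope_zero]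
  refine (smul_subset_basePolytope_smul ha.le ρ).antisymm ?_
  calc basePolytope (a • ρ) = a • a⁻¹ • basePolytope (a • ρ) := by
        rw [smul_smul, mul_inv_cancel₀ ha.ne', one_smul]
    _ ⊆ a • basePolytope (a⁻¹ • a • ρ) :=
        Set.smul_set_mono (smul_subset_basePolytope_smul (inv_nonneg.2 ha.le) _)
    _ = a • basePolytope ρ := by rw [smul_smul, inv_mul_cancel₀ ha.ne', one_smul]

theorem sum_basePolytope {N : Type*} (s : Finset N) {ρ : N → Finset E → ℝ}
    (hρ : ∀ i ∈ s, IsPolymatroidRank (ρ i)) :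
    ∑ i ∈ s, basePolytope (ρ i) = basePolytope (∑ i ∈ s, ρ i) := by
  classical
  induction s using Finset.induction_on with
  | empty => simp [basePolytope_zero]
  | insert i s hi ih =>
    rw [sum_insert hi, sum_insert hi, ih fun j hj => hρ j (mem_insert_of_mem hj),
      basePolytope_add (hρ i (mem_insert_self i s)) (IsPolymatroidRank.sum fun j hj =>
        hρ j (mem_insert_of_mem hj))]

end MinkowskiSum

def IsTight {E : Type*} (ρ : Finset E → ℝ) (x : E → ℝ) (U : Finset E) : Prop :=
  ∑ e ∈ U, x e = ρ U

section TightSets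

variable {E : Type*} [DecidableEq E] {ρ : Finset E → ℝ} {x : E → ℝ} {A B : Finset E}

lemma IsTight.union (hρ : IsPolymatroidRank ρ) (hx : ∀ U, ∑ e ∈ U, x e ≤ ρ U)
    (hA : IsTight ρ x A) (hB : IsTight ρ x B) : IsTight ρ x (A ∪ B) := by
  unfold IsTight at *
  linarith [hx (A ∪ B), hx (A ∩ B), hρ.submodular A B, sum_union_inter (s₁ := A) (s₂ := B) (f := x)]

lemma IsTight.inter (hρ : IsPolymatroidRank ρ) (hx : ∀ U, ∑ e ∈ U, x e ≤ ρ U)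
    (hA : IsTight ρ x A) (hB : IsTight ρ x B) : IsTight ρ x (A ∩ B) := by
  unfold IsTight at *
  linarith [hx (A ∪ B), hx (A ∩ B), hρ.submodular A B, sum_union_inter (s₁ := A) (s₂ := B) (f := x)]

variable [Fintype E]

lemma exists_isTight_maximal_notMem (hρ : IsPolymatroidRank ρ) (hx : x ∈ basePolytope ρ) (e : E) :
    ∃ W, e ∉ W ∧ IsTight ρ x W ∧ ∀ T, e ∉ T → IsTight ρ x T → T ⊆ W := by
  classical
  let tight := univ.filter fun T : Finset E => e ∉ T ∧ IsTight ρ x T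
  have hsup : e ∉ tight.sup id ∧ IsTight ρ x (tight.sup id) :=
    sup_induction (p := fun W => e ∉ W ∧ IsTight ρ x W)
      ⟨notMem_empty e, by simp [IsTight, hρ.map_empty]⟩
      (fun A hA B hB => ⟨by simp [hA.1, hB.1], hA.2.union hρ hx.2.1 hB.2⟩)
      (fun T hT => (mem_filter.1 hT).2)
  exact ⟨_, hsup.1, hsup.2, fun T heT hT => le_sup (f := id) (mem_filter.2 ⟨mem_univ T, heT, hT⟩)⟩

lemma exists_isTight_minimal_mem (hρ : IsPolymatroidRank ρ) (hx : x ∈ basePolytope ρ) (e : E) :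
    ∃ U, e ∈ U ∧ IsTight ρ x U ∧ ∀ T, e ∈ T → IsTight ρ x T → U ⊆ T := by
  classical
  let tight := univ.filter fun T : Finset E => e ∈ T ∧ IsTight ρ x T
  have hinf : e ∈ tight.inf id ∧ IsTight ρ x (tight.inf id) :=
    inf_induction (p := fun U => e ∈ U ∧ IsTight ρ x U)
      ⟨by simp, by rw [top_eq_univ]; exact hx.2.2⟩
      (fun A hA B hB => ⟨by simp [hA.1, hB.1], hA.2.inter hρ hx.2.1 hB.2⟩)
      (fun T hT => (mem_filter.1 hT).2)
  exact ⟨_, hinf.1, hinf.2, fun T heT hT => inf_le (f := id) (mem_filter.2 ⟨mem_univ T, heT, hT⟩)⟩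

end TightSets

lemma exchange_nonneg {E : Type*} [DecidableEq E] {z : E → ℝ} {e f : E} {δ : ℝ}
    (hz : ∀ g, 0 ≤ z g) (hef : e ≠ f) (hδ : 0 ≤ δ) (hδf : δ ≤ z f) (g : E) :
    0 ≤ (z + Pi.single e δ - Pi.single f δ : E → ℝ) g := by
  obtain rfl | hgf := eq_or_ne g f
  · simpa [Pi.single_eq_of_ne hef.symm] using hδf
  · simpa [Pi.single_eq_of_ne hgf] using
      add_nonneg (hz g) ((Pi.single_nonneg.2 hδ : (0 : E → ℝ) ≤ Pi.single e δ) g)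

section Beckmann

open Filter Topology Set

lemma MonotoneOn.intervalIntegral_le_mul {g : ℝ → ℝ} {a b : ℝ} (hab : a ≤ b)
    (hg : MonotoneOn g (Icc a b)) : ∫ t in a..b, g t ≤ (b - a) * g b := by
  have hint : IntervalIntegrable g volume a b := (uIcc_of_le hab ▸ hg).intervalIntegrable
  simpa using intervalIntegral.integral_mono_on hab hint intervalIntegrable_const
    fun t ht => hg ht (right_mem_Icc.2 hab) ht.2

lemma MonotoneOn.mul_le_intervalIntegral {g : ℝ → ℝ} {a b : ℝ} (hab : a ≤ b)
    (hg : MonotoneOn g (Icc a b)) : (b - a) * g a ≤ ∫ t in a..b, g t := by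
  have hint : IntervalIntegrable g volume a b := (uIcc_of_le hab ▸ hg).intervalIntegrable
  simpa using intervalIntegral.integral_mono_on hab intervalIntegrable_const hint
    fun t ht => hg (left_mem_Icc.2 hab) ht ht.1

variable {E : Type*} [Fintype E] {c : E → ℝ → ℝ}

lemma beckmann_sub_beckmann (hc : ∀ e, MonotoneOn (c e) (Ici 0)) {y z : E → ℝ}
    (hy : ∀ e, 0 ≤ y e) (hz : ∀ e, 0 ≤ z e) :
    beckmann c y - beckmann c z = ∑ e, ∫ t in z e..y e, c e t := by
  have hint : ∀ e {a}, 0 ≤ a → IntervalIntegrable (c e) volume 0 a := fun e a ha =>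
    ((hc e).mono (ordConnected_Ici.uIcc_subset (mem_Ici.2 le_rfl) ha)).intervalIntegrable
  rw [beckmann, beckmann, ← sum_sub_distrib]
  exact sum_congr rfl fun e _ =>
    intervalIntegral.integral_interval_sub_left (hint e (hy e)) (hint e (hz e))

variable [DecidableEq E] {z : E → ℝ} {e f : E} {δ : ℝ}

lemma beckmann_exchange_sub_le (hc : ∀ e, MonotoneOn (c e) (Ici 0)) (hz : ∀ g, 0 ≤ z g)
    (hef : e ≠ f) (hδ : 0 ≤ δ) (hδf : δ ≤ z f) :
    beckmann c (z + Pi.single e δ - Pi.single f δ) - beckmann c z ≤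
      δ * (c e (z e + δ) - c f (z f - δ)) := by
  rw [beckmann_sub_beckmann hc (exchange_nonneg hz hef hδ hδf) hz,
    Fintype.sum_eq_add e f hef fun g hg => by simp [hg.1, hg.2]]
  simp only [Pi.add_apply, Pi.sub_apply, Pi.single_eq_same, Pi.single_eq_of_ne hef,
    Pi.single_eq_of_ne hef.symm, sub_zero, add_zero, intervalIntegral.integral_symm (z f - δ)]
  have he := ((hc e).mono fun t ht => (hz e).trans ht.1).intervalIntegral_le_mul
    (le_add_of_nonneg_right hδ)
  have hf := ((hc f).mono fun t ht => (sub_nonneg.2 hδf).trans ht.1).mul_le_intervalIntegral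
    (sub_le_self _ hδ)
  simp only [add_sub_cancel_left, sub_sub_cancel] at he hf
  linarith

end Beckmann

section Exchange

open Filter Topology Set

variable {E : Type*} [Fintype E] [DecidableEq E] {ρ : Finset E → ℝ} {c : E → ℝ → ℝ}
  {z : E → ℝ} {e f : E}

lemma exchange_mem_basePolytope (hz : z ∈ basePolytope ρ) (hef : e ≠ f) {δ : ℝ} (hδ : 0 ≤ δ)
    (hδf : δ ≤ z f) (hslack : ∀ T, e ∈ T → f ∉ T → ∑ g ∈ T, z g + δ ≤ ρ T) :
    z + Pi.single e δ - Pi.single f δ ∈ basePolytope ρ := by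
  obtain ⟨hz0, hzU, hzT⟩ := hz
  have hsum : ∀ U : Finset E, ∑ g ∈ U, (z + Pi.single e δ - Pi.single f δ : E → ℝ) g =
      ∑ g ∈ U, z g + (if e ∈ U then δ else 0) - (if f ∈ U then δ else 0) := fun U => by
    simp [sum_add_distrib, sum_sub_distrib, sum_pi_single']
  refine ⟨fun g => ?_, fun U => ?_, by rw [hsum]; simp [hzT]⟩
  · exact exchange_nonneg hz0 hef hδ hδf g
  · rw [hsum]
    have := hzU U
    split_ifs with he hf hf
    · linarith
    · linarith [hslack U he hf]
    all_goals linarith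

lemma eventually_exchange_mem_basePolytope (hz : z ∈ basePolytope ρ) (hef : e ≠ f)
    (hf : 0 < z f) (hT : ∀ T, e ∈ T → f ∉ T → ¬IsTight ρ z T) :
    ∀ᶠ δ in 𝓝[>] 0, z + Pi.single e δ - Pi.single f δ ∈ basePolytope ρ := by
  have hslack : ∀ T : Finset E, ∀ᶠ δ in 𝓝[>] (0 : ℝ),
      e ∈ T → f ∉ T → ∑ g ∈ T, z g + δ ≤ ρ T := by
    intro T
    by_cases heT : e ∈ T ∧ f ∉ T
    · have hpos : 0 < ρ T - ∑ g ∈ T, z g := sub_pos.2 ((hz.2.1 T).lt_of_ne (hT T heT.1 heT.2))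
      filter_upwards [nhdsWithin_le_nhds (eventually_lt_nhds hpos)] with δ hδ _ _
      linarith
    · exact Eventually.of_forall fun δ he hf => (heT ⟨he, hf⟩).elim
  filter_upwards [eventually_all.2 hslack, self_mem_nhdsWithin,
    nhdsWithin_le_nhds (eventually_lt_nhds hf)] with δ hδT hδ hδf
  exact exchange_mem_basePolytope hz hef (le_of_lt hδ) hδf.le hδT

lemma eventually_beckmann_exchange_lt (hc_cont : ∀ e, ContinuousOn (c e) (Ici 0))
    (hc_mono : ∀ e, MonotoneOn (c e) (Ici 0)) (hz : ∀ g, 0 ≤ z g) (hef : e ≠ f) (hf : 0 < z f)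
    (hlt : c e (z e) < c f (z f)) :
    ∀ᶠ δ in 𝓝[>] 0, beckmann c (z + Pi.single e δ - Pi.single f δ) < beckmann c z := by
  have hsmall : ∀ᶠ δ in 𝓝[>] (0 : ℝ), δ < z f := nhdsWithin_le_nhds (eventually_lt_nhds hf)
  have hce : Tendsto (fun δ => c e (z e + δ)) (𝓝[>] 0) (𝓝 (c e (z e))) := by
    refine ((hc_cont e).continuousWithinAt (hz e)).tendsto.comp (tendsto_nhdsWithin_iff.2 ⟨?_, ?_⟩)
    · exact tendsto_nhdsWithin_of_tendsto_nhds
        (by simpa using (continuous_const_add (z e)).tendsto 0)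
    · filter_upwards [self_mem_nhdsWithin] with δ hδ
      exact add_nonneg (hz e) (le_of_lt hδ)
  have hcf : Tendsto (fun δ => c f (z f - δ)) (𝓝[>] 0) (𝓝 (c f (z f))) := by
    refine ((hc_cont f).continuousWithinAt (hz f)).tendsto.comp (tendsto_nhdsWithin_iff.2 ⟨?_, ?_⟩)
    · exact tendsto_nhdsWithin_of_tendsto_nhds
        (by simpa using (continuous_sub_left (z f)).tendsto 0)
    · filter_upwards [hsmall] with δ hδ
      exact sub_nonneg.2 hδ.le
  filter_upwards [hce.eventually_lt hcf hlt, self_mem_nhdsWithin, hsmall] with δ hδc hδ hδf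
  linarith [beckmann_exchange_sub_le hc_mono hz hef (le_of_lt hδ) hδf.le,
    mul_neg_of_pos_of_neg hδ (sub_neg.2 hδc)]

theorem exists_isTight_of_cost_lt (hc_cont : ∀ e, ContinuousOn (c e) (Ici 0))
    (hc_mono : ∀ e, MonotoneOn (c e) (Ici 0)) (hz : z ∈ basePolytope ρ)
    (hmin : IsMinOn (beckmann c) (basePolytope ρ) z) (hef : e ≠ f) (hf : 0 < z f)
    (hlt : c e (z e) < c f (z f)) : ∃ T, e ∈ T ∧ f ∉ T ∧ IsTight ρ z T := by
  by_contra! hT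
  obtain ⟨δ, hmem, hdec⟩ := ((eventually_exchange_mem_basePolytope hz hef hf hT).and
    (eventually_beckmann_exchange_lt hc_cont hc_mono hz.1 hef hf hlt)).exists
  exact (isMinOn_iff.1 hmin _ hmem).not_gt hdec

end Exchange

section Comparison

variable {E : Type*} [Fintype E] [DecidableEq E] {σ τ : Finset E → ℝ} {x xbar : E → ℝ}

/-- `x(U \ W) = x(U) - x(U ∩ W) ≥ (σ + τ)(U ∪ W) - (σ + τ)(W) ≥ σ(U ∪ W) - σ(W) ≥ x̄(U \ W)`. -/
lemma sum_sdiff_le_of_isTight (hσ : IsPolymatroidRank σ) (hτ : IsPolymatroidRank τ)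
    (hx : x ∈ basePolytope (σ + τ)) (hxbar : xbar ∈ basePolytope σ) {U W : Finset E}
    (hU : IsTight (σ + τ) x U) (hW : IsTight σ xbar W) :
    ∑ g ∈ U \ W, xbar g ≤ ∑ g ∈ U \ W, x g := by
  have hsplit := sum_inter_add_sum_sdiff U W x
  have hsplit' := sum_sdiff (f := xbar) (subset_union_right (s₁ := U) (s₂ := W))
  rw [union_sdiff_right] at hsplit'
  have hxUW := hx.2.1 (U ∩ W)
  simp only [IsTight, Pi.add_apply] at hU hW hxUW
  linarith [hσ.submodular U W, hτ.submodular U W, hτ.monotone (subset_union_right : W ⊆ U ∪ W),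
    hxbar.2.1 (U ∪ W)]

theorem cost_le_of_isMinOn_beckmann (hσ : IsPolymatroidRank σ) (hτ : IsPolymatroidRank τ)
    {c : E → ℝ → ℝ} (hc_cont : ∀ e, ContinuousOn (c e) (Set.Ici 0))
    (hc_mono : ∀ e, MonotoneOn (c e) (Set.Ici 0))
    (hx : x ∈ basePolytope (σ + τ)) (hxmin : IsMinOn (beckmann c) (basePolytope (σ + τ)) x)
    (hxbar : xbar ∈ basePolytope σ) (hxbarmin : IsMinOn (beckmann c) (basePolytope σ) xbar)
    (e : E) : c e (xbar e) ≤ c e (x e) := by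
  by_contra! he
  have hxe : x e < xbar e :=
    lt_of_not_ge fun h => he.not_ge (hc_mono e (hxbar.1 e) (hx.1 e) h)
  obtain ⟨W, heW, hW, hWmax⟩ := exists_isTight_maximal_notMem hσ hxbar e
  obtain ⟨U, heU, hU, hUmin⟩ := exists_isTight_minimal_mem (hσ.add hτ) hx e
  have hle : ∀ g ∈ U \ W, x g ≤ xbar g := by
    intro g hg
    obtain ⟨hgU, hgW⟩ := mem_sdiff.1 hg
    obtain rfl | hge := eq_or_ne g e
    · exact hxe.le
    by_contra! hgx
    have hcost : c e (xbar e) ≤ c g (xbar g) := by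
      by_contra! hlt
      obtain ⟨T, hgT, heT, hT⟩ := exists_isTight_of_cost_lt hc_cont hc_mono hxbar hxbarmin hge
        ((hx.1 e).trans_lt hxe) hlt
      exact hgW (hWmax T heT hT hgT)
    obtain ⟨T, heT, hgT, hT⟩ := exists_isTight_of_cost_lt hc_cont hc_mono hx hxmin hge.symm
      ((hxbar.1 g).trans_lt hgx)
      (he.trans_le (hcost.trans (hc_mono g (hxbar.1 g) (hx.1 g) hgx.le)))
    exact hgT (hUmin T heT hT hgU)
  exact (sum_lt_sum hle ⟨e, mem_sdiff.2 ⟨heU, heW⟩, hxe⟩).not_ge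
    (sum_sdiff_le_of_isTight hσ hτ hx hxbar hU hW)

end Comparison

theorem stmt2_general {E N : Type*} [Fintype E] [DecidableEq E] [Fintype N] [DecidableEq N]
    (ρ : N → Finset E → ℝ)
    (hsub : ∀ i, ∀ U V : Finset E, ρ i (U ∪ V) + ρ i (U ∩ V) ≤ ρ i U + ρ i V)
    (hmono : ∀ i, ∀ U V : Finset E, U ⊆ V → ρ i U ≤ ρ i V)
    (hnorm : ∀ i, ρ i ∅ = 0)
    (j : N) (dj dbarj : ℝ) (hd : 0 ≤ dbarj) (hdlt : dbarj < dj)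
    (c : E → ℝ → ℝ)
    (hc_cont : ∀ e, ContinuousOn (c e) (Set.Ici 0))
    (hc_mono : ∀ e, MonotoneOn (c e) (Set.Ici 0))
    (P Pbar : Set (E → ℝ))
    (hP : P = ∑ i : N, basePolytope (ρ i))
    (hPbar : Pbar = (dbarj / dj) • basePolytope (ρ j)
        + ∑ i ∈ Finset.univ.erase j, basePolytope (ρ i))
    (x xbar : E → ℝ)
    (hx : x ∈ P) (hxmin : ∀ y ∈ P, beckmann c x ≤ beckmann c y)
    (hxbar : xbar ∈ Pbar) (hxbarmin : ∀ y ∈ Pbar, beckmann c xbar ≤ beckmann c y) :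
    ∀ e, c e (xbar e) ≤ c e (x e) := by
  have hρ : ∀ i, IsPolymatroidRank (ρ i) := fun i => ⟨hsub i, fun U V => hmono i U V, hnorm i⟩
  have hdj : 0 ≤ dj := hd.trans hdlt.le
  set θ := dbarj / dj
  have hθ0 : 0 ≤ θ := div_nonneg hd hdj
  have hθ1 : θ ≤ 1 := div_le_one_of_le₀ hdlt.le hdj
  set σ := θ • ρ j + ∑ i ∈ univ.erase j, ρ i
  set τ := (1 - θ) • ρ j
  have hσ : IsPolymatroidRank σ := ((hρ j).smul hθ0).add (IsPolymatroidRank.sum fun i _ => hρ i)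
  have hτ : IsPolymatroidRank τ := (hρ j).smul (sub_nonneg.2 hθ1)
  have hP' : P = basePolytope (σ + τ) := by
    rw [hP, sum_basePolytope _ fun i _ => hρ i, ← add_sum_erase _ _ (mem_univ j)]
    congr 1
    module
  have hPbar' : Pbar = basePolytope σ := by
    rw [hPbar, smul_basePolytope (hρ j) hθ0, sum_basePolytope _ fun i _ => hρ i,
      basePolytope_add ((hρ j).smul hθ0) (IsPolymatroidRank.sum fun i _ => hρ i)]
  subst hP' hPbar'
  exact cost_le_of_isMinOn_beckmann hσ hτ hc_cont hc_mono hx (isMinOn_iff.2 hxmin) hxbar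
    (isMinOn_iff.2 hxbarmin)

theorem stmt2 {E N : Type*} [Fintype E] [DecidableEq E] [Fintype N] [DecidableEq N]
    (ρ : N → Finset E → ℝ)
    (hsub : ∀ i, ∀ U V : Finset E, ρ i (U ∪ V) + ρ i (U ∩ V) ≤ ρ i U + ρ i V)
    (hmono : ∀ i, ∀ U V : Finset E, U ⊆ V → ρ i U ≤ ρ i V)
    (hnorm : ∀ i, ρ i ∅ = 0)
    (j : N) (dj dbarj : ℝ) (hd : 0 ≤ dbarj) (hdlt : dbarj < dj)
    (c : E → ℝ → ℝ)
    (hc_cont : ∀ e, ContinuousOn (c e) (Set.Ici 0))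
    (hc_mono : ∀ e, MonotoneOn (c e) (Set.Ici 0))
    (hc_nonneg : ∀ e, ∀ t ∈ Set.Ici (0:ℝ), 0 ≤ c e t)
    (P Pbar : Set (E → ℝ))
    (hP : P = ∑ i : N, basePolytope (ρ i))
    (hPbar : Pbar = (dbarj / dj) • basePolytope (ρ j)
        + ∑ i ∈ Finset.univ.erase j, basePolytope (ρ i))
    (x xbar : E → ℝ)
    (hx : x ∈ P) (hxmin : ∀ y ∈ P, beckmann c x ≤ beckmann c y)
    (hxbar : xbar ∈ Pbar) (hxbarmin : ∀ y ∈ Pbar, beckmann c xbar ≤ beckmann c y) :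
    ∀ e, c e (xbar e) ≤ c e (x e) :=
  stmt2_general ρ hsub hmono hnorm j dj dbarj hd hdlt c hc_cont hc_mono P Pbar hP hPbar x xbar hx
    hxmin hxbar hxbarmin
end

section
/- Let $Q_1, \ldots, Q_k \subseteq \mathbb{R}^E$ be polytopes with Minkowski sum $Q = \sum_{i=1}^k Q_i$, and let $Q_i^{\uparrow} = Q_i + \mathbb{R}_{\geq 0}^E$ and $Q^{\uparrow} = Q + \mathbb{R}_{\geq 0}^E$ denote their dominants. Then the set of edge directions of (bounded edges of) $Q^{\uparrow}$ is the union over $i$ of the sets of edge directions of $Q_i^{\uparrow}$. -/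
open Finset Pointwise

/-- `segment ℝ u v` (with `u ≠ v`) is a (bounded) edge of `Q` when it is an extreme
subset of `Q`, i.e. a one-dimensional face. -/
def IsEdgeOf {V : Type*} [AddCommGroup V] [Module ℝ V] (Q : Set V) (u v : V) : Prop :=
  u ≠ v ∧ IsExtreme ℝ Q (segment ℝ u v)

/-- `w` is an edge direction of `Q` if some (bounded) edge of `Q` is parallel to `w`. -/
def IsEdgeDirOf {V : Type*} [AddCommGroup V] [Module ℝ V] (Q : Set V) (w : V) : Prop :=
  ∃ u v, IsEdgeOf Q u v ∧ ∃ t : ℝ, t ≠ 0 ∧ v - u = t • w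

/-- The dominant of a set `Q ⊆ ℝ^E`: `Q + ℝ₊^E`. -/
def dominant {E : Type*} (Q : Set (E → ℝ)) : Set (E → ℝ) :=
  {x | ∃ y ∈ Q, y ≤ x}

/-!
Every edge `[a, b]` of the dominant of a polytope is exposed by a linear functional `f` with
negative coefficients: separate the line through `a` and `b` from the convex hull of the vertices
off that line and of the points `a + eⱼ`; this hull misses the edge because the complement of a
face is convex. For such an `f`, maximising over a dominant is the same as maximising over the
polytope, and the maximisers over a Minkowski sum are the sums of the maximisers over the summands.
So an edge of `Q↑` is a sum of faces of the `Qᵢ↑`, one of which must be a parallel edge.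
Conversely, an edge `[a, b]` of `Qᵢ↑` gives the face `[a, b] + K` of `Q↑` with `K` compact and
convex, and such a set has an edge parallel to `b - a`: the fibre over an extreme point of its
projection along `b - a`.
-/

section Edges

variable {V : Type*} [AddCommGroup V] [Module ℝ V]

theorem IsEdgeDirOf.of_smul {A : Set V} {t : ℝ} {w : V} (h : IsEdgeDirOf A (t • w)) :
    IsEdgeDirOf A w := by
  obtain ⟨u, v, huv, s, -, hvu⟩ := h
  refine ⟨u, v, huv, s * t, fun hst => huv.1 ?_, by rw [hvu, smul_smul]⟩
  rw [← sub_eq_zero, ← neg_sub, hvu, smul_smul, hst, zero_smul, neg_zero]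

theorem IsEdgeDirOf.of_isExtreme {A B : Set V} {w : V} (hAB : IsExtreme ℝ A B)
    (h : IsEdgeDirOf B w) : IsEdgeDirOf A w := by
  obtain ⟨u, v, ⟨huv, hB⟩, ht⟩ := h
  exact ⟨u, v, ⟨huv, hAB.trans hB⟩, ht⟩

theorem sub_mem_span_of_mem_segment {a b x : V} (hx : x ∈ segment ℝ a b) :
    x - a ∈ ℝ ∙ (b - a) := by
  rw [segment_eq_image'] at hx
  obtain ⟨θ, -, rfl⟩ := hx
  simpa using Submodule.smul_mem _ θ (Submodule.mem_span_singleton_self (b - a))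

theorem IsExtreme.mem_segment_of_sub_mem_span {A : Set V} {a b x : V}
    (h : IsExtreme ℝ A (segment ℝ a b)) (hx : x ∈ A) (hxa : x - a ∈ ℝ ∙ (b - a)) :
    x ∈ segment ℝ a b := by
  obtain ⟨t, ht⟩ := Submodule.mem_span_singleton.1 hxa
  have hxt : x = a + t • (b - a) := by rw [ht]; abel
  have ha := h.subset (left_mem_segment ℝ a b)
  have hb := h.subset (right_mem_segment ℝ a b)
  rcases lt_or_ge 1 t with h1 | h1
  · refine h.right_mem_of_mem_openSegment ha hx (right_mem_segment ℝ a b)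
      ⟨1 - t⁻¹, t⁻¹, by simp [inv_lt_one_of_one_lt₀ h1], by positivity, by ring, ?_⟩
    rw [hxt]; match_scalars <;> field_simp
    ring
  rcases lt_or_ge t 0 with h0 | h0
  · have h1t : 0 < 1 - t := by linarith
    refine h.left_mem_of_mem_openSegment hx hb (left_mem_segment ℝ a b)
      ⟨(1 - t)⁻¹, -t * (1 - t)⁻¹, by positivity, by nlinarith [inv_pos.2 h1t], ?_, ?_⟩
    · field_simp; ring
    · rw [hxt]; match_scalars <;> field_simp <;> ring
  · rw [segment_eq_image']
    exact ⟨t, ⟨h0, h1⟩, hxt.symm⟩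

theorem IsExtreme.inter_preimage {W : Type*} [AddCommGroup W] [Module ℝ W] (f : V →ₗ[ℝ] W)
    {A : Set V} {B : Set W} (h : IsExtreme ℝ (f '' A) B) : IsExtreme ℝ A (A ∩ f ⁻¹' B) := by
  refine ⟨Set.inter_subset_left, fun x hx y hy z hz hzxy => ⟨hx, ?_⟩⟩
  refine h.left_mem_of_mem_openSegment (Set.mem_image_of_mem f hx) (Set.mem_image_of_mem f hy)
    hz.2 ?_
  obtain ⟨α, β, hα, hβ, hαβ, rfl⟩ := hzxy
  exact ⟨α, β, hα, hβ, hαβ, by simp⟩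

end Edges

section Polytope

variable {V : Type*} [AddCommGroup V] [Module ℝ V]

def IsPolytope (P : Set V) : Prop :=
  ∃ S : Set V, S.Finite ∧ S.Nonempty ∧ P = convexHull ℝ S

theorem IsPolytope.add {P Q : Set V} (hP : IsPolytope P) (hQ : IsPolytope Q) :
    IsPolytope (P + Q) := by
  obtain ⟨S, hS, hSne, rfl⟩ := hP
  obtain ⟨T, hT, hTne, rfl⟩ := hQ
  exact ⟨S + T, hS.add hT, hSne.add hTne, (convexHull_add S T).symm⟩

theorem IsPolytope.sum {ι : Type*} (s : Finset ι) {P : ι → Set V}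
    (hP : ∀ i ∈ s, IsPolytope (P i)) : IsPolytope (∑ i ∈ s, P i) :=
  Finset.sum_induction _ _ (fun _ _ => IsPolytope.add)
    ⟨{0}, Set.finite_singleton 0, Set.singleton_nonempty 0, convexHull_singleton 0 |>.symm⟩ hP

theorem IsPolytope.convex {P : Set V} (hP : IsPolytope P) : Convex ℝ P := by
  obtain ⟨S, -, -, rfl⟩ := hP
  exact convex_convexHull ℝ S

theorem IsPolytope.nonempty {P : Set V} (hP : IsPolytope P) : P.Nonempty := by
  obtain ⟨S, -, hSne, rfl⟩ := hP
  exact hSne.convexHull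

variable [TopologicalSpace V] [IsTopologicalAddGroup V] [ContinuousSMul ℝ V]

theorem IsPolytope.isCompact {P : Set V} (hP : IsPolytope P) : IsCompact P := by
  obtain ⟨S, hS, -, rfl⟩ := hP
  exact hS.isCompact_convexHull ℝ

end Polytope

section Exposed

variable {V : Type*} [AddCommGroup V] [Module ℝ V] [TopologicalSpace V]

namespace ContinuousLinearMap

theorem toExposed_add (f : StrongDual ℝ V) (A B : Set V) :
    f.toExposed (A + B) = f.toExposed A + f.toExposed B := by
  ext x
  constructor
  · rintro ⟨⟨a, ha, b, hb, rfl⟩, hmax⟩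
    refine ⟨a, ⟨ha, fun a' ha' => ?_⟩, b, ⟨hb, fun b' hb' => ?_⟩, rfl⟩
    · simpa using hmax _ (Set.add_mem_add ha' hb)
    · simpa using hmax _ (Set.add_mem_add ha hb')
  · rintro ⟨a, ⟨ha, hamax⟩, b, ⟨hb, hbmax⟩, rfl⟩
    refine ⟨Set.add_mem_add ha hb, ?_⟩
    rintro _ ⟨a', ha', b', hb', rfl⟩
    simpa using add_le_add (hamax a' ha') (hbmax b' hb')

theorem toExposed_sum {ι : Type*} (f : StrongDual ℝ V) (s : Finset ι) (A : ι → Set V) :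
    f.toExposed (∑ i ∈ s, A i) = ∑ i ∈ s, f.toExposed (A i) := by
  classical
  induction s using Finset.induction_on with
  | empty => ext; simp +contextual [toExposed, Set.mem_zero]
  | insert i s hi ih => rw [Finset.sum_insert hi, Finset.sum_insert hi, toExposed_add, ih]

end ContinuousLinearMap

theorem IsCompact.toExposed_nonempty {A : Set V} (hA : IsCompact A) (hne : A.Nonempty)
    (f : StrongDual ℝ V) : (f.toExposed A).Nonempty := by
  obtain ⟨x, hx, hmax⟩ := hA.exists_isMaxOn hne f.continuous.continuousOn
  exact ⟨x, hx, hmax⟩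

end Exposed

section Normed

variable {V : Type*} [NormedAddCommGroup V] [NormedSpace ℝ V]

theorem isEdgeDirOf_of_subset_line {A F : Set V} {p w x y : V} (hAF : IsExtreme ℝ A F)
    (hF : IsCompact F) (hFc : Convex ℝ F) (hline : ∀ z ∈ F, z - p ∈ ℝ ∙ w) (hx : x ∈ F)
    (hy : y ∈ F) (hxy : x ≠ y) : IsEdgeDirOf A w := by
  have hw : w ≠ 0 := by
    rintro rfl
    have hx' := hline x hx
    have hy' := hline y hy
    simp only [Submodule.span_singleton_eq_bot.2 rfl, Submodule.mem_bot, sub_eq_zero] at hx' hy'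
    exact hxy (hx'.trans hy'.symm)
  obtain ⟨φ, hφ⟩ := SeparatingDual.exists_eq_one (R := ℝ) hw
  have hsub : ∀ z ∈ F, ∀ z' ∈ F, z - z' = (φ z - φ z') • w := by
    intro z hz z' hz'
    obtain ⟨t, ht⟩ :=
      Submodule.mem_span_singleton.1 (Submodule.sub_mem _ (hline z hz) (hline z' hz'))
    rw [sub_sub_sub_cancel_right] at ht
    rw [← map_sub, ← ht, map_smul, hφ, smul_eq_mul, mul_one]
  obtain ⟨u, hu, humin⟩ := hF.exists_isMinOn ⟨x, hx⟩ φ.continuous.continuousOn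
  obtain ⟨v, hv, hvmax⟩ := hF.exists_isMaxOn ⟨x, hx⟩ φ.continuous.continuousOn
  rw [isMinOn_iff] at humin
  rw [isMaxOn_iff] at hvmax
  have huv : φ u < φ v := by
    by_contra! h
    have hxy' : φ x = φ y := le_antisymm ((hvmax x hx).trans (h.trans (humin y hy)))
      ((hvmax y hy).trans (h.trans (humin x hx)))
    exact hxy (sub_eq_zero.1 (by rw [hsub x hx y hy, hxy', sub_self, zero_smul]))
  have hseg : F = segment ℝ u v := by
    refine Set.Subset.antisymm (fun z hz => ?_) (hFc.segment_subset hu hv)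
    rw [segment_eq_image']
    refine ⟨(φ z - φ u) / (φ v - φ u), ⟨div_nonneg (sub_nonneg.2 (humin z hz)) (by linarith),
      (div_le_one (by linarith)).2 (by linarith [hvmax z hz])⟩, ?_⟩
    beta_reduce
    rw [hsub v hv u hu, smul_smul, div_mul_cancel₀ _ (sub_pos.2 huv).ne', ← hsub z hz u hu,
      add_sub_cancel]
  exact ⟨u, v, ⟨fun h => huv.ne (h ▸ rfl), hseg ▸ hAF⟩, φ v - φ u, (sub_pos.2 huv).ne',
    hsub v hv u hu⟩

theorem isEdgeDirOf_segment_add {a b : V} {K : Set V} (hab : a ≠ b)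
    (hc : IsCompact (segment ℝ a b + K)) (hconv : Convex ℝ (segment ℝ a b + K))
    (hK : K.Nonempty) : IsEdgeDirOf (segment ℝ a b + K) (b - a) := by
  obtain ⟨φ, hφ⟩ := SeparatingDual.exists_eq_one (R := ℝ) (sub_ne_zero.2 hab.symm)
  set π : V →L[ℝ] V := ContinuousLinearMap.id ℝ V - φ.smulRight (b - a)
  have hπ : ∀ x y, π x = π y ↔ x - y ∈ ℝ ∙ (b - a) := by
    intro x y
    rw [← sub_eq_zero, ← map_sub, Submodule.mem_span_singleton]
    constructor
    · intro h
      refine ⟨φ (x - y), ?_⟩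
      simp only [π, sub_apply, ContinuousLinearMap.id_apply,
        ContinuousLinearMap.smulRight_apply, sub_eq_zero] at h
      exact h.symm
    · rintro ⟨t, ht⟩
      simp [π, ← ht, hφ]
  obtain ⟨k, hk⟩ := hK
  obtain ⟨p, hp⟩ := (hc.image π.continuous).extremePoints_nonempty
    (Set.Nonempty.image π ⟨_, Set.add_mem_add (left_mem_segment ℝ a b) hk⟩)
  obtain ⟨_, ⟨s, hs, k', hk', rfl⟩, rfl⟩ := hp.1
  have hsa : π (s + k') = π (a + k') := (hπ _ _).2 (by
    simpa using sub_mem_span_of_mem_segment hs)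
  have hfib : ∀ x ∈ segment ℝ a b, x + k' ∈ (segment ℝ a b + K) ∩ π ⁻¹' {π (s + k')} :=
    fun x hx => ⟨Set.add_mem_add hx hk', by
      rw [Set.mem_preimage, Set.mem_singleton_iff, hsa, hπ]
      simpa using sub_mem_span_of_mem_segment hx⟩
  refine isEdgeDirOf_of_subset_line (isExtreme_singleton.2 hp |>.inter_preimage π.toLinearMap)
    (hc.inter_right (isClosed_singleton.preimage π.continuous))
    (hconv.inter ((convex_singleton _).linear_preimage π.toLinearMap)) (p := a + k')
    (fun z hz => ?_) (hfib a (left_mem_segment ℝ a b)) (hfib b (right_mem_segment ℝ a b))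
    (by simpa using hab)
  rw [← hπ, ← hsa]
  exact hz.2

theorem exists_isEdgeDirOf_of_segment_eq_sum {ι : Type*} [Fintype ι] {A M : ι → Set V}
    {u v : V} (huv : u ≠ v) (hAM : ∀ i, IsExtreme ℝ (A i) (M i)) (hM : ∀ i, IsCompact (M i))
    (hMc : ∀ i, Convex ℝ (M i)) (hsum : segment ℝ u v = ∑ i, M i) :
    ∃ i, IsEdgeDirOf (A i) (v - u) := by
  classical
  obtain ⟨g, hg, rfl⟩ := (Set.mem_fintype_sum _ _).1 (hsum ▸ left_mem_segment ℝ u v)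
  obtain ⟨h, hh, rfl⟩ := (Set.mem_fintype_sum _ _).1 (hsum ▸ right_mem_segment ℝ _ v)
  obtain ⟨i, hi⟩ : ∃ i, g i ≠ h i := by
    by_contra! hgh
    exact huv (Finset.sum_congr rfl fun i _ => hgh i)
  refine ⟨i, isEdgeDirOf_of_subset_line (hAM i) (hM i) (hMc i) (p := g i) (fun x hx => ?_)
    (hg i) (hh i) hi⟩
  have hmem : ∑ j, Function.update g i x j ∈ segment ℝ (∑ j, g j) (∑ j, h j) := by
    rw [hsum, Set.mem_fintype_sum]
    refine ⟨_, fun j => ?_, rfl⟩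
    rcases eq_or_ne j i with rfl | hj
    · simpa using hx
    · simpa [hj] using hg j
  have hdiff : ∑ j, Function.update g i x j - ∑ j, g j = x - g i := by
    rw [Finset.sum_update_of_mem (Finset.mem_univ i), Finset.sdiff_singleton_eq_erase,
      ← Finset.add_sum_erase _ g (Finset.mem_univ i), add_sub_add_right_eq_sub]
  simpa only [hdiff] using sub_mem_span_of_mem_segment hmem

theorem ContinuousLinearMap.toExposed_convexHull (f : StrongDual ℝ V) {S : Set V}
    (hS : S.Finite) : f.toExposed (convexHull ℝ S) = convexHull ℝ (f.toExposed S) := by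
  have hexp := ContinuousLinearMap.toExposed.isExposed (l := f) (A := convexHull ℝ S)
  have hconv := hexp.convex (convex_convexHull ℝ S)
  refine Set.Subset.antisymm ?_ (convexHull_min (fun x hx => ⟨subset_convexHull ℝ S hx.1,
    fun y hy => convexHull_min hx.2 (convex_halfSpace_le f.isLinear (f x)) hy⟩) hconv)
  have hext : (f.toExposed (convexHull ℝ S)).extremePoints ℝ ⊆ f.toExposed S := fun x hx =>
    ⟨extremePoints_convexHull_subset (hexp.isExtreme.extremePoints_subset_extremePoints hx),
      fun y hy => (extremePoints_subset hx).2 y (subset_convexHull ℝ S hy)⟩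
  rw [← closure_convexHull_extremePoints (hexp.isCompact (hS.isCompact_convexHull ℝ)) hconv]
  exact closure_minimal (convexHull_mono hext) ((hS.subset fun x hx => hx.1).isClosed_convexHull ℝ)

end Normed

section Dominant

variable {E : Type*}

theorem Convex.dominant {P : Set (E → ℝ)} (hP : Convex ℝ P) : Convex ℝ (dominant P) := by
  rintro x ⟨y, hy, hyx⟩ x' ⟨y', hy', hyx'⟩ α β hα hβ hαβ
  exact ⟨α • y + β • y', hP hy hy' hα hβ hαβ,
    add_le_add (smul_le_smul_of_nonneg_left hyx hα) (smul_le_smul_of_nonneg_left hyx' hβ)⟩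

theorem toExposed_dominant {f : StrongDual ℝ (E → ℝ)} (hf : StrictAnti f)
    (P : Set (E → ℝ)) : f.toExposed (dominant P) = f.toExposed P := by
  ext x
  constructor
  · rintro ⟨⟨y, hy, hyx⟩, hmax⟩
    obtain rfl : y = x := by
      by_contra hne
      exact (hf (lt_of_le_of_ne hyx hne)).not_ge (hmax y ⟨y, hy, le_rfl⟩)
    exact ⟨hy, fun z hz => hmax z ⟨z, hz, le_rfl⟩⟩
  · rintro ⟨hx, hmax⟩
    exact ⟨⟨x, hx, le_rfl⟩, fun z ⟨y, hy, hyz⟩ => (hf.antitone hyz).trans (hmax y hy)⟩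

theorem isExtreme_dominant_toExposed {f : StrongDual ℝ (E → ℝ)} (hf : StrictAnti f)
    (P : Set (E → ℝ)) : IsExtreme ℝ (dominant P) (f.toExposed P) :=
  toExposed_dominant hf P ▸ ContinuousLinearMap.toExposed.isExposed.isExtreme

theorem strictAnti_of_map_single_neg [Fintype E] [DecidableEq E] {f : (E → ℝ) →ₗ[ℝ] ℝ}
    (hf : ∀ j, f (Pi.single j 1) < 0) : StrictAnti f := by
  intro x y hxy
  obtain ⟨j, hj⟩ := (Pi.lt_def.1 hxy).2
  have hexp : f (y - x) = ∑ i, (y - x) i * f (Pi.single i 1) := by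
    conv_lhs => rw [← Finset.univ_sum_single (y - x)]
    rw [map_sum]
    refine Finset.sum_congr rfl fun i _ => ?_
    rw [← smul_eq_mul, ← map_smul, ← Pi.single_smul', smul_eq_mul, mul_one]
  have hneg : f (y - x) < 0 := by
    rw [hexp, ← Finset.sum_const_zero (s := (Finset.univ : Finset E)) (M := ℝ)]
    exact Finset.sum_lt_sum
      (fun i _ => mul_nonpos_of_nonneg_of_nonpos (sub_nonneg.2 (hxy.le i)) (hf i).le)
      ⟨j, Finset.mem_univ j, mul_neg_of_pos_of_neg (sub_pos.2 hj) (hf j)⟩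
  rw [map_sub, sub_neg] at hneg
  exact hneg

theorem IsExtreme.add_notMem_segment {P : Set (E → ℝ)} {a b c : E → ℝ}
    (h : IsExtreme ℝ (dominant P) (segment ℝ a b)) (hc : 0 < c) : a + c ∉ segment ℝ a b := by
  intro hac
  rw [segment_eq_image'] at hac
  obtain ⟨t, ⟨ht0, -⟩, hct⟩ := hac
  have hc' : c = t • (b - a) := (add_right_injective a hct).symm
  obtain ⟨y, hy, hyb⟩ := h.subset (right_mem_segment ℝ a b)
  have hbc : b + c ∈ segment ℝ a b := h.mem_segment_of_sub_mem_span
    ⟨y, hy, hyb.trans (le_add_of_nonneg_right hc.le)⟩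
    (Submodule.mem_span_singleton.2 ⟨1 + t, by rw [hc']; module⟩)
  rw [segment_eq_image'] at hbc
  obtain ⟨θ, ⟨-, hθ1⟩, hθ⟩ := hbc
  have : (θ - 1 - t) • (b - a) = 0 := by
    rw [← sub_eq_zero.2 hθ, hc']; module
  rcases smul_eq_zero.1 this with h | h
  · exact hc.ne' (by rw [hc', show t = 0 by linarith, zero_smul])
  · exact hc.ne' (by rw [hc', h, smul_zero])

end Dominant

section Exposing

variable {E : Type*} [Fintype E]

theorem IsExtreme.exists_strictAnti_of_dominant_convexHull {S : Set (E → ℝ)} (hS : S.Finite)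
    {a b : E → ℝ} (h : IsExtreme ℝ (dominant (convexHull ℝ S)) (segment ℝ a b)) :
    ∃ f : StrongDual ℝ (E → ℝ), StrictAnti f ∧ f (b - a) = 0 ∧
      ∀ s ∈ S, f s ≤ f a ∧ (f s = f a → s - a ∈ ℝ ∙ (b - a)) := by
  classical
  set L := AffineSubspace.mk' a (ℝ ∙ (b - a))
  set G : Set (E → ℝ) := {s ∈ S | s ∉ L} ∪ Set.range fun j => a + Pi.single j 1
  have ha := h.subset (left_mem_segment ℝ a b)
  have hG : G ⊆ dominant (convexHull ℝ S) \ segment ℝ a b := by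
    rintro x (⟨hxS, hxL⟩ | ⟨j, rfl⟩)
    · exact ⟨⟨x, subset_convexHull ℝ S hxS, le_rfl⟩,
        fun hx => hxL (AffineSubspace.mem_mk'.2 (sub_mem_span_of_mem_segment hx))⟩
    · obtain ⟨y, hy, hya⟩ := ha
      exact ⟨⟨y, hy, hya.trans (le_add_of_nonneg_right (Pi.single_nonneg.2 zero_le_one))⟩,
        h.add_notMem_segment (Pi.single_pos.2 one_pos)⟩
  have hdisj : Disjoint (convexHull ℝ G) L := by
    refine Set.disjoint_left.2 fun x hxG hxL => ?_
    have hx := convexHull_min hG (h.convex_sdiff (convex_convexHull ℝ S).dominant) hxG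
    exact hx.2 (h.mem_segment_of_sub_mem_span hx.1 (AffineSubspace.mem_mk'.1 hxL))
  have hGfin : G.Finite := (hS.subset (Set.sep_subset _ _)).union (Set.finite_range _)
  obtain ⟨f, u, v, hfG, huv, hfL⟩ := geometric_hahn_banach_compact_closed
    (convex_convexHull ℝ G) (hGfin.isCompact_convexHull ℝ) L.convex
    L.closed_of_finiteDimensional hdisj
  -- `f` is bounded below on the line `L`, hence constant on it
  have hfd : f (b - a) = 0 := by
    by_contra hne
    have := hfL (a + ((v - f a) / f (b - a)) • (b - a)) (AffineSubspace.mem_mk'.2 (by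
      simpa using Submodule.smul_mem _ _ (Submodule.mem_span_singleton_self (b - a))))
    rw [map_add, map_smul, smul_eq_mul, div_mul_cancel₀ _ hne] at this
    linarith
  have hfL' : ∀ x ∈ L, f x = f a := fun x hx => by
    obtain ⟨t, ht⟩ := Submodule.mem_span_singleton.1 (AffineSubspace.mem_mk'.1 hx)
    rw [← sub_eq_zero, ← map_sub, ← vsub_eq_sub, ← ht, map_smul, hfd, smul_zero]
  have hfG' : ∀ x ∈ G, f x < f a := fun x hx =>
    (hfG x (subset_convexHull ℝ G hx)).trans (huv.trans (hfL a (AffineSubspace.self_mem_mk' _ _)))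
  refine ⟨f, strictAnti_of_map_single_neg (f := f.toLinearMap) fun j => ?_, hfd, fun s hs => ?_⟩
  · simpa using hfG' _ (Or.inr ⟨j, rfl⟩)
  · by_cases hsL : s ∈ L
    · exact ⟨(hfL' s hsL).le, fun _ => AffineSubspace.mem_mk'.1 hsL⟩
    · have := hfG' s (Or.inl ⟨hs, hsL⟩)
      exact ⟨this.le, fun heq => absurd heq this.ne⟩

theorem IsPolytope.exists_toExposed_dominant_eq_segment {P : Set (E → ℝ)} (hP : IsPolytope P)
    {a b : E → ℝ} (h : IsExtreme ℝ (dominant P) (segment ℝ a b)) :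
    ∃ f : StrongDual ℝ (E → ℝ), StrictAnti f ∧ f.toExposed (dominant P) = segment ℝ a b := by
  obtain ⟨S, hS, -, rfl⟩ := hP
  obtain ⟨f, hf, hfd, hfS⟩ := h.exists_strictAnti_of_dominant_convexHull hS
  have hmax : ∀ x ∈ dominant (convexHull ℝ S), f x ≤ f a := fun x ⟨y, hy, hyx⟩ =>
    (hf.antitone hyx).trans (convexHull_min (fun s hs => (hfS s hs).1)
      (convex_halfSpace_le f.isLinear (f a)) hy)
  have haF : a ∈ f.toExposed (dominant (convexHull ℝ S)) :=
    ⟨h.subset (left_mem_segment ℝ a b), hmax⟩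
  refine ⟨f, hf, Set.Subset.antisymm (fun x hx => ?_) ?_⟩
  · rw [toExposed_dominant hf, f.toExposed_convexHull hS] at hx haF
    have hline : f.toExposed S ⊆ AffineSubspace.mk' a (ℝ ∙ (b - a)) := fun s hs =>
      (hfS s hs.1).2 (le_antisymm (hfS s hs.1).1 (convexHull_min (fun y hy => hs.2 y hy.1)
        (convex_halfSpace_le f.isLinear (f s)) haF))
    exact h.mem_segment_of_sub_mem_span ⟨x, convexHull_mono (Set.sep_subset _ _) hx, le_rfl⟩
      (AffineSubspace.mem_mk'.1 (convexHull_min hline (AffineSubspace.convex _) hx))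
  · have hfb : f b = f a := by rw [← sub_eq_zero, ← map_sub, hfd]
    exact (ContinuousLinearMap.toExposed.isExposed.convex
      (convex_convexHull ℝ S).dominant).segment_subset haF
      ⟨h.subset (right_mem_segment ℝ a b), fun x hx => (hmax x hx).trans_eq hfb.symm⟩

end Exposing

theorem stmt7 {E : Type*} [Fintype E] (k : ℕ) (Q : Fin k → Set (E → ℝ))
    (hpoly : ∀ i, ∃ Vs : Finset (E → ℝ), (Vs : Set (E → ℝ)).Nonempty ∧
      Q i = convexHull ℝ (↑Vs : Set (E → ℝ)))
    (w : E → ℝ) :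
    IsEdgeDirOf (dominant (∑ i : Fin k, Q i)) w ↔
      ∃ i, IsEdgeDirOf (dominant (Q i)) w := by
  have hQ : ∀ i, IsPolytope (Q i) := fun i => by
    obtain ⟨S, hSne, hS⟩ := hpoly i
    exact ⟨S, S.finite_toSet, hSne, hS⟩
  have hsum : IsPolytope (∑ i, Q i) := IsPolytope.sum _ fun i _ => hQ i
  constructor
  · rintro ⟨u, v, ⟨huv, hedge⟩, t, -, hvu⟩
    obtain ⟨f, hf, hexp⟩ := hsum.exists_toExposed_dominant_eq_segment hedge
    rw [toExposed_dominant hf, f.toExposed_sum] at hexp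
    obtain ⟨i, hi⟩ := exists_isEdgeDirOf_of_segment_eq_sum huv
      (fun i => isExtreme_dominant_toExposed hf (Q i))
      (fun i => ContinuousLinearMap.toExposed.isExposed.isCompact (hQ i).isCompact)
      (fun i => ContinuousLinearMap.toExposed.isExposed.convex (hQ i).convex) hexp.symm
    exact ⟨i, (hvu ▸ hi).of_smul⟩
  · rintro ⟨i, a, b, ⟨hab, hedge⟩, t, -, hba⟩
    obtain ⟨f, hf, hexp⟩ := (hQ i).exists_toExposed_dominant_eq_segment hedge
    have hM : f.toExposed (∑ j, Q j) = segment ℝ a b + ∑ j ∈ univ.erase i, f.toExposed (Q j) := by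
      rw [f.toExposed_sum, ← Finset.add_sum_erase _ _ (mem_univ i), ← toExposed_dominant hf, hexp]
    have hexposed := ContinuousLinearMap.toExposed.isExposed (l := f) (A := ∑ j, Q j)
    have hK := (Set.add_nonempty.1 (hM ▸ hsum.isCompact.toExposed_nonempty hsum.nonempty f)).2
    have hedge' := isEdgeDirOf_segment_add hab (hM ▸ hexposed.isCompact hsum.isCompact)
      (hM ▸ hexposed.convex hsum.convex) hK
    exact (hba ▸ (hM ▸ hedge').of_isExtreme (isExtreme_dominant_toExposed hf _)).of_smul
end
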